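/- Consider the class of real-valued random variables Y having a differentiable, absolutely continuous probability density p_Y with finite Fisher information J(Y) < ∞ and finite second moment E[Y²] < ∞. The following two statements are equivalent: (1) every Y in this class satisfies the one-dimensional Gaussian logarithmic Sobolev inequality D(P_Y ‖ G) ≤ (1/2) I(P_Y ‖ G); (2) every Y in this class satisfies Stam's inequality N(Y) J(Y) ≥ 1. -/

import Mathlib

open MeasureTheory ProbabilityTheory
open scoped ENNReal NNReal Classical

/-- The relative entropy (Kullback–Leibler divergence) `D(Q‖P)`, equal to
`∫ ln(dQ/dP) dQ` when `Q ≪ P` (and the log-likelihood ratio is integrable), and `+∞`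
otherwise. -/
noncomputable def relEnt {α : Type*} [MeasurableSpace α] (Q P : Measure α) : ℝ≥0∞ :=
  if Q ≪ P ∧ Integrable (fun x => Real.log (Q.rnDeriv P x).toReal) Q
  then ENNReal.ofReal (∫ x, Real.log (Q.rnDeriv P x).toReal ∂Q) else ⊤

/-- The standard Gaussian density `γ(y) = (2π)^{-1/2} exp(-y²/2)` on `ℝ`. -/
noncomputable def gaussPdf (y : ℝ) : ℝ :=
  (Real.sqrt (2 * Real.pi))⁻¹ * Real.exp (-(y^2)/2)

/-- The Borel measure on `ℝ` with density `p` with respect to Lebesgue measure. -/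
noncomputable def densMeasure (p : ℝ → ℝ) : Measure ℝ :=
  (volume : Measure ℝ).withDensity fun y => ENNReal.ofReal (p y)

/-- The Fisher information `J(Y) = ∫ (p'(y)/p(y))² p(y) dy` of a random variable with
density `p`. -/
noncomputable def fisherInfoFn (p : ℝ → ℝ) : ℝ := ∫ y, (deriv p y / p y)^2 * p y

/-- The differential entropy `h(Y) = -∫ p ln p`. -/
noncomputable def diffEntropy (p : ℝ → ℝ) : ℝ := -∫ y, p y * Real.log (p y)

/-- The entropy power `N(Y) = exp(2h(Y))/(2πe)`. -/
noncomputable def entropyPower (p : ℝ → ℝ) : ℝ :=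
  Real.exp (2 * diffEntropy p) / (2 * Real.pi * Real.exp 1)

/-- The relative Fisher information `I(P_Y ‖ G) = ∫ |d/dy ln(p(y)/γ(y))|² p(y) dy` between the
law of `Y` (with density `p`) and the standard Gaussian measure. -/
noncomputable def relFisherGauss (p : ℝ → ℝ) : ℝ :=
  ∫ y, (deriv (fun z => Real.log (p z / gaussPdf z)) y)^2 * p y

/-- The class of densities considered: differentiable (hence absolutely continuous)
probability densities with finite Fisher information and finite second moment. -/
def NiceDensity (p : ℝ → ℝ) : Prop :=
  Differentiable ℝ p ∧ (∀ y, 0 ≤ p y) ∧ IsProbabilityMeasure (densMeasure p) ∧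
    Integrable (fun y => (deriv p y / p y)^2 * p y) ∧ Integrable (fun y => y^2 * p y)

/-!
For `p` in the class, `D(P‖G) = -h(p) + E[Y²]/2 + log(2π)/2`, and an integration by parts
(`∫ y p' = -1`) gives `I(P‖G) = J(p) - 2 + E[Y²]`. The second moment cancels, so the
logarithmic Sobolev inequality for `p` reads `log(2π) + 2 ≤ 2h(p) + J(p)`, while Stam's
inequality reads `log(2π) + 1 ≤ 2h(p) + log J(p)`. Since `log J ≤ J - 1`, Stam implies the LSI.
Conversely the dilations `p_s(y) = p(y/s)/s` stay in the class, with `h(p_s) = h(p) + log s`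
and `J(p_s) = J(p)/s²`; the LSI for `p_s` with `s² = J(p)` is Stam's inequality for `p`.
-/

open Real Filter Topology

/-- Over `s > 0`, `2 log s + J / s²` is minimised at `s² = J`, with value `log J + 1`. -/
lemma exp_le_exp_mul_iff_forall_pos {c a J : ℝ} :
    exp c ≤ exp a * J ↔ ∀ s : ℝ, 0 < s → c + 1 ≤ a + 2 * log s + J / s ^ 2 := by
  constructor
  · intro h s hs
    have hJ : 0 < J := pos_of_mul_pos_right ((exp_pos c).trans_le h) (exp_pos a).le
    have hc : c ≤ a + log J := by rwa [← exp_le_exp, exp_add, exp_log hJ]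
    have hlog := log_le_sub_one_of_pos (show 0 < J / s ^ 2 by positivity)
    rw [log_div hJ.ne' (by positivity), log_pow] at hlog
    push_cast at hlog
    linarith
  · intro h
    rcases le_or_gt J 0 with hJ | hJ
    · have hs := h (exp ((c - a) / 2)) (exp_pos _)
      rw [log_exp] at hs
      have : J / exp ((c - a) / 2) ^ 2 ≤ 0 := div_nonpos_of_nonpos_of_nonneg hJ (sq_nonneg _)
      linarith
    · have hs := h (√J) (sqrt_pos.2 hJ)
      rw [sq_sqrt hJ.le, div_self hJ.ne', log_sqrt hJ.le] at hs
      rw [← exp_log hJ, ← exp_add, exp_le_exp]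
      linarith

lemma gaussPdf_pos (y : ℝ) : 0 < gaussPdf y := by
  unfold gaussPdf; positivity

lemma continuous_gaussPdf : Continuous gaussPdf := by
  unfold gaussPdf; fun_prop

lemma integrable_gaussPdf : Integrable gaussPdf := by
  refine ((integrable_exp_neg_mul_sq (by norm_num : (0 : ℝ) < 1 / 2)).const_mul
    (√(2 * π))⁻¹).congr (ae_of_all _ fun y => ?_)
  unfold gaussPdf
  ring_nf

lemma log_gaussPdf (y : ℝ) : log (gaussPdf y) = -(y ^ 2) / 2 - log (2 * π) / 2 := by
  rw [gaussPdf, log_mul (by positivity) (exp_ne_zero _), log_inv, log_exp,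
    log_sqrt (by positivity)]
  ring

lemma hasDerivAt_gaussPdf (y : ℝ) : HasDerivAt gaussPdf (-y * gaussPdf y) y := by
  have h : HasDerivAt (fun z : ℝ => -(z ^ 2) / 2) (-y) y :=
    ((hasDerivAt_pow 2 y).neg.div_const 2).congr_deriv (by push_cast; ring)
  exact (h.exp.const_mul (√(2 * π))⁻¹).congr_deriv (by unfold gaussPdf; ring)

lemma mul_log_div_gaussPdf (x y : ℝ) :
    x * log (x / gaussPdf y) = x * log x + y ^ 2 * x / 2 + log (2 * π) / 2 * x := by
  rcases eq_or_ne x 0 with rfl | hx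
  · simp
  · rw [log_div hx (gaussPdf_pos y).ne', log_gaussPdf]
    ring

lemma sub_le_mul_log_div {x z : ℝ} (hx : 0 ≤ x) (hz : 0 < z) : x - z ≤ x * log (x / z) := by
  have h := mul_le_mul_of_nonneg_left (self_sub_one_le_mul_log (div_nonneg hx hz.le)) hz.le
  calc x - z = z * (x / z - 1) := by field_simp
    _ ≤ z * (x / z * log (x / z)) := h
    _ = x * log (x / z) := by field_simp

lemma densMeasure_univ (p : ℝ → ℝ) :
    densMeasure p Set.univ = ∫⁻ y, ENNReal.ofReal (p y) := by
  rw [densMeasure, withDensity_apply _ MeasurableSet.univ, setLIntegral_univ]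

section DensMeasure

variable {p : ℝ → ℝ}

lemma isProbabilityMeasure_densMeasure (h0 : ∀ y, 0 ≤ p y) (hi : Integrable p)
    (h1 : ∫ y, p y = 1) : IsProbabilityMeasure (densMeasure p) :=
  ⟨by rw [densMeasure_univ, ← ofReal_integral_eq_lintegral_ofReal hi (ae_of_all _ h0), h1,
    ENNReal.ofReal_one]⟩

lemma integrable_densMeasure_iff (hm : Measurable p) (h0 : ∀ y, 0 ≤ p y) {f : ℝ → ℝ} :
    Integrable f (densMeasure p) ↔ Integrable fun y => p y * f y := by
  rw [densMeasure, integrable_withDensity_iff hm.ennreal_ofReal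
    (ae_of_all _ fun _ => ENNReal.ofReal_lt_top)]
  simp_rw [ENNReal.toReal_ofReal (h0 _), mul_comm]

lemma integral_densMeasure (hm : Measurable p) (h0 : ∀ y, 0 ≤ p y) (f : ℝ → ℝ) :
    ∫ y, f y ∂densMeasure p = ∫ y, p y * f y := by
  rw [densMeasure, integral_withDensity_eq_integral_toReal_smul hm.ennreal_ofReal
    (ae_of_all _ fun _ => ENNReal.ofReal_lt_top)]
  simp_rw [ENNReal.toReal_ofReal (h0 _), smul_eq_mul]

lemma densMeasure_eq_withDensity_gaussianReal (hm : Measurable p) :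
    densMeasure p = (gaussianReal 0 1).withDensity fun y => ENNReal.ofReal (p y / gaussPdf y) := by
  have hγ (y : ℝ) : gaussianPDFReal 0 1 y = gaussPdf y := by simp [gaussianPDFReal, gaussPdf]
  have hratio : Measurable fun y => p y / gaussPdf y := hm.div continuous_gaussPdf.measurable
  rw [gaussianReal_of_var_ne_zero 0 one_ne_zero,
    ← withDensity_mul _ (measurable_gaussianPDF 0 1) hratio.ennreal_ofReal]
  unfold densMeasure
  congr 1
  funext y
  rw [Pi.mul_apply, gaussianPDF, hγ, ← ENNReal.ofReal_mul (gaussPdf_pos y).le,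
    mul_div_cancel₀ _ (gaussPdf_pos y).ne']

end DensMeasure

section Score

variable {p : ℝ → ℝ}

lemma deriv_eq_zero_of_eq_zero (h0 : ∀ y, 0 ≤ p y) {y : ℝ} (hy : p y = 0) : deriv p y = 0 :=
  IsLocalMin.deriv_eq_zero (Eventually.of_forall fun z => hy ▸ h0 z)

lemma deriv_div_mul_self (h0 : ∀ y, 0 ≤ p y) (y : ℝ) : deriv p y / p y * p y = deriv p y := by
  rcases eq_or_ne (p y) 0 with hy | hy
  · rw [hy, deriv_eq_zero_of_eq_zero h0 hy, mul_zero]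
  · exact div_mul_cancel₀ _ hy

lemma abs_mul_mul_le {b : ℝ} (hb : 0 ≤ b) (u v : ℝ) :
    |u * v| * b ≤ (u ^ 2 * b + v ^ 2 * b) / 2 := by
  rw [abs_mul]
  nlinarith [mul_nonneg (sq_nonneg (|u| - |v|)) hb, sq_abs u, sq_abs v]

lemma abs_mul_deriv_le (h0 : ∀ y, 0 ≤ p y) (f : ℝ → ℝ) (y : ℝ) :
    |f y * deriv p y| ≤ ((deriv p y / p y) ^ 2 * p y + f y ^ 2 * p y) / 2 := by
  calc |f y * deriv p y| = |deriv p y / p y * f y| * p y := by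
        rw [← abs_of_nonneg (h0 y), ← abs_mul, abs_of_nonneg (h0 y), mul_right_comm,
          deriv_div_mul_self h0, mul_comm]
    _ ≤ _ := abs_mul_mul_le (h0 y) _ _

end Score

namespace NiceDensity

variable {p : ℝ → ℝ}

lemma differentiable (hp : NiceDensity p) : Differentiable ℝ p := hp.1

lemma nonneg (hp : NiceDensity p) : ∀ y, 0 ≤ p y := hp.2.1

lemma integrable_fisher (hp : NiceDensity p) :
    Integrable fun y => (deriv p y / p y) ^ 2 * p y := hp.2.2.2.1

lemma integrable_sq_mul (hp : NiceDensity p) : Integrable fun y => y ^ 2 * p y := hp.2.2.2.2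

lemma lintegral_ofReal_eq_one (hp : NiceDensity p) : ∫⁻ y, ENNReal.ofReal (p y) = 1 := by
  rw [← densMeasure_univ, hp.2.2.1.measure_univ]

lemma integrable (hp : NiceDensity p) : Integrable p := by
  refine ⟨hp.differentiable.continuous.aestronglyMeasurable, ?_⟩
  rw [hasFiniteIntegral_iff_ofReal (ae_of_all _ hp.nonneg), hp.lintegral_ofReal_eq_one]
  exact ENNReal.one_lt_top

lemma integral_eq_one (hp : NiceDensity p) : ∫ y, p y = 1 := by
  rw [integral_eq_lintegral_of_nonneg_ae (ae_of_all _ hp.nonneg)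
    hp.integrable.aestronglyMeasurable, hp.lintegral_ofReal_eq_one, ENNReal.toReal_one]

lemma integrable_mul (hp : NiceDensity p) {f : ℝ → ℝ} (hfm : Measurable f)
    (hf : Integrable fun y => f y ^ 2 * p y) : Integrable fun y => f y * p y := by
  refine Integrable.mono' ((hf.add hp.integrable).div_const 2)
    (hfm.mul hp.differentiable.continuous.measurable).aestronglyMeasurable
    (ae_of_all _ fun y => ?_)
  simpa [abs_of_nonneg (hp.nonneg y)] using abs_mul_mul_le (hp.nonneg y) (f y) 1

lemma integrable_mul_deriv (hp : NiceDensity p) {f : ℝ → ℝ} (hfm : Measurable f)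
    (hf : Integrable fun y => f y ^ 2 * p y) : Integrable fun y => f y * deriv p y :=
  Integrable.mono' ((hp.integrable_fisher.add hf).div_const 2)
    (hfm.mul (measurable_deriv p)).aestronglyMeasurable
    (ae_of_all _ fun y => abs_mul_deriv_le hp.nonneg f y)

lemma integrable_deriv (hp : NiceDensity p) : Integrable (deriv p) := by
  simpa using
    hp.integrable_mul_deriv (f := fun _ => 1) measurable_const (by simpa using hp.integrable)

lemma integral_mul_deriv (hp : NiceDensity p) : ∫ y, y * deriv p y = -1 := by
  have hyd := hp.integrable_mul_deriv measurable_id' hp.integrable_sq_mul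
  have hderiv (y : ℝ) : HasDerivAt (fun z => z * p z) (p y + y * deriv p y) y :=
    ((hasDerivAt_id y).mul (hp.differentiable y).hasDerivAt).congr_deriv (by simp)
  have h := integral_eq_zero_of_hasDerivAt_of_integrable hderiv (hp.integrable.add hyd)
    (hp.integrable_mul measurable_id' hp.integrable_sq_mul)
  rw [integral_add hp.integrable hyd, hp.integral_eq_one] at h
  linarith

lemma tendsto_atTop (hp : NiceDensity p) : Tendsto p atTop (𝓝 0) := by
  have hlim : Tendsto p atTop (𝓝 (limUnder atTop p)) :=
    tendsto_limUnder_of_hasDerivAt_of_integrableOn_Ioi (a := 0)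
      (fun x _ => (hp.differentiable x).hasDerivAt) hp.integrable_deriv.integrableOn
  have hzero : limUnder atTop p = 0 := by
    refine (hp.integrable.integrableAtFilter _).eq_zero_of_tendsto (fun s hs => ?_) hlim
    obtain ⟨b, hb⟩ := mem_atTop_sets.1 hs
    exact top_le_iff.1 (volume_Ici (a := b) ▸ measure_mono hb)
  rwa [hzero] at hlim

lemma le_half_fisherInfoFn_add_one (hp : NiceDensity p) (y : ℝ) :
    p y ≤ (fisherInfoFn p + 1) / 2 := by
  have hp' := hp.integrable_deriv
  have htail : ∫ z in Set.Ioi y, deriv p z = 0 - p y :=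
    integral_Ioi_of_hasDerivAt_of_tendsto' (fun x _ => (hp.differentiable x).hasDerivAt)
      hp'.integrableOn hp.tendsto_atTop
  calc p y = ‖∫ z in Set.Ioi y, deriv p z‖ := by
        rw [htail, zero_sub, norm_neg, Real.norm_of_nonneg (hp.nonneg y)]
    _ ≤ ∫ z in Set.Ioi y, ‖deriv p z‖ := norm_integral_le_integral_norm _
    _ ≤ ∫ z, |deriv p z| := setIntegral_le_integral hp'.abs (ae_of_all _ fun z => abs_nonneg _)
    _ ≤ ∫ z, ((deriv p z / p z) ^ 2 * p z + p z) / 2 :=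
        integral_mono hp'.abs ((hp.integrable_fisher.add hp.integrable).div_const 2)
          fun z => by simpa using abs_mul_deriv_le hp.nonneg (fun _ => 1) z
    _ = (fisherInfoFn p + 1) / 2 := by
        rw [integral_div, integral_add hp.integrable_fisher hp.integrable, hp.integral_eq_one,
          fisherInfoFn]

lemma integrable_mul_log (hp : NiceDensity p) : Integrable fun y => p y * log (p y) := by
  set B := max ((fisherInfoFn p + 1) / 2) 1
  have hlogB : 0 ≤ log B := log_nonneg (le_max_right _ _)
  have hlog2π : 0 ≤ log (2 * π) := log_nonneg (by linarith [pi_gt_three])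
  have hbound : Integrable fun y =>
      p y * log B + (y ^ 2 * p y / 2 + log (2 * π) / 2 * p y + gaussPdf y) :=
    (hp.integrable.mul_const _).add
      (((hp.integrable_sq_mul.div_const 2).add (hp.integrable.const_mul _)).add integrable_gaussPdf)
  refine hbound.mono' hp.differentiable.continuous.mul_log.aestronglyMeasurable
    (ae_of_all _ fun y => ?_)
  have h0 := hp.nonneg y
  have hupper : p y * log (p y) ≤ p y * log B := by
    rcases h0.eq_or_lt with h | h
    · simp [← h]
    · exact mul_le_mul_of_nonneg_left
        (log_le_log h ((hp.le_half_fisherInfoFn_add_one y).trans (le_max_left _ _))) h0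
  have hlower := sub_le_mul_log_div h0 (gaussPdf_pos y)
  rw [mul_log_div_gaussPdf] at hlower
  rw [Real.norm_eq_abs, abs_le]
  constructor <;> nlinarith [mul_nonneg h0 hlogB, mul_nonneg hlog2π h0,
    mul_nonneg (sq_nonneg y) h0, gaussPdf_pos y]

end NiceDensity

lemma relEnt_eq_ofReal_integral_log {α : Type*} [MeasurableSpace α] {Q P : Measure α}
    [SigmaFinite P] {g : α → ℝ} (hg : Measurable g) (h0 : ∀ x, 0 ≤ g x)
    (hQ : Q = P.withDensity fun x => ENNReal.ofReal (g x))
    (hint : Integrable (fun x => log (g x)) Q) :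
    relEnt Q P = ENNReal.ofReal (∫ x, log (g x) ∂Q) := by
  have hac : Q ≪ P := hQ ▸ withDensity_absolutelyContinuous _ _
  have hrn : (fun x => log (Q.rnDeriv P x).toReal) =ᵐ[Q] fun x => log (g x) := by
    have h := Measure.rnDeriv_withDensity P hg.ennreal_ofReal
    rw [← hQ] at h
    filter_upwards [hac.ae_le h] with x hx
    rw [hx, ENNReal.toReal_ofReal (h0 x)]
  rw [relEnt, if_pos ⟨hac, hint.congr hrn.symm⟩, integral_congr_ae hrn]

variable {p : ℝ → ℝ}

lemma NiceDensity.relEnt_gaussianReal (hp : NiceDensity p) :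
    relEnt (densMeasure p) (gaussianReal 0 1) =
      ENNReal.ofReal (-diffEntropy p + (∫ y, y ^ 2 * p y) / 2 + log (2 * π) / 2) := by
  have hm := hp.differentiable.continuous.measurable
  have hsum : Integrable fun y => p y * log (p y) + y ^ 2 * p y / 2 :=
    hp.integrable_mul_log.add (hp.integrable_sq_mul.div_const 2)
  have hlogratio : Integrable fun y => p y * log (p y / gaussPdf y) := by
    simp_rw [mul_log_div_gaussPdf]
    exact hsum.add (hp.integrable.const_mul _)
  have hratio : Measurable fun y => p y / gaussPdf y := hm.div continuous_gaussPdf.measurable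
  rw [relEnt_eq_ofReal_integral_log hratio
    (fun y => div_nonneg (hp.nonneg y) (gaussPdf_pos y).le)
    (densMeasure_eq_withDensity_gaussianReal hm)
    ((integrable_densMeasure_iff hm hp.nonneg).2 hlogratio), integral_densMeasure hm hp.nonneg]
  simp_rw [mul_log_div_gaussPdf]
  rw [integral_add hsum (hp.integrable.const_mul _),
    integral_add hp.integrable_mul_log (hp.integrable_sq_mul.div_const 2), integral_div,
    integral_const_mul, hp.integral_eq_one, diffEntropy]
  congr 1
  ring

lemma deriv_log_div_gaussPdf {y : ℝ} (hd : DifferentiableAt ℝ p y) (hy : 0 < p y) :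
    deriv (fun z => log (p z / gaussPdf z)) y = deriv p y / p y + y := by
  have hγ := (gaussPdf_pos y).ne'
  have hratio : HasDerivAt (fun z => p z / gaussPdf z)
      ((deriv p y * gaussPdf y - p y * (-y * gaussPdf y)) / gaussPdf y ^ 2) y :=
    hd.hasDerivAt.div (hasDerivAt_gaussPdf y) hγ
  rw [(hratio.log (div_pos hy (gaussPdf_pos y)).ne').deriv]
  field_simp
  ring

lemma sq_deriv_log_div_gaussPdf_mul (hd : Differentiable ℝ p) (h0 : ∀ y, 0 ≤ p y) (y : ℝ) :
    deriv (fun z => log (p z / gaussPdf z)) y ^ 2 * p y =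
      (deriv p y / p y) ^ 2 * p y + 2 * (y * deriv p y) + y ^ 2 * p y := by
  rcases (h0 y).eq_or_lt with hy | hy
  · rw [← hy, deriv_eq_zero_of_eq_zero h0 hy.symm]
    ring
  · rw [deriv_log_div_gaussPdf (hd y) hy]
    field_simp
    ring

lemma NiceDensity.relFisherGauss_eq (hp : NiceDensity p) :
    relFisherGauss p = fisherInfoFn p - 2 + ∫ y, y ^ 2 * p y := by
  have hyd := (hp.integrable_mul_deriv measurable_id' hp.integrable_sq_mul).const_mul 2
  have hsum : Integrable fun y => (deriv p y / p y) ^ 2 * p y + 2 * (y * deriv p y) :=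
    hp.integrable_fisher.add hyd
  rw [relFisherGauss,
    integral_congr_ae (ae_of_all _ (sq_deriv_log_div_gaussPdf_mul hp.differentiable hp.nonneg)),
    integral_add hsum hp.integrable_sq_mul, integral_add hp.integrable_fisher hyd,
    integral_const_mul, hp.integral_mul_deriv, fisherInfoFn]
  ring

lemma relFisherGauss_nonneg (h0 : ∀ y, 0 ≤ p y) : 0 ≤ relFisherGauss p :=
  integral_nonneg fun y => mul_nonneg (sq_nonneg _) (h0 y)

lemma NiceDensity.relEnt_le_half_relFisherGauss_iff (hp : NiceDensity p) :
    relEnt (densMeasure p) (gaussianReal 0 1) ≤ ENNReal.ofReal ((1 / 2) * relFisherGauss p) ↔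
      log (2 * π) + 2 ≤ 2 * diffEntropy p + fisherInfoFn p := by
  have hI := relFisherGauss_nonneg hp.nonneg
  rw [hp.relEnt_gaussianReal, ENNReal.ofReal_le_ofReal_iff (by positivity), hp.relFisherGauss_eq]
  constructor <;> intro h <;> linarith

lemma one_le_entropyPower_mul_iff (p : ℝ → ℝ) (J : ℝ) :
    1 ≤ entropyPower p * J ↔ exp (log (2 * π) + 1) ≤ exp (2 * diffEntropy p) * J := by
  rw [entropyPower, div_mul_eq_mul_div, one_le_div (by positivity), exp_add,
    exp_log (by positivity)]

noncomputable def dilate (s : ℝ) (p : ℝ → ℝ) (y : ℝ) : ℝ := p (y / s) / s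

variable {s : ℝ}

lemma deriv_dilate (hd : Differentiable ℝ p) (y : ℝ) :
    deriv (dilate s p) y = deriv p (y / s) / s ^ 2 := by
  have h : HasDerivAt (dilate s p) (deriv p (y / s) * (1 / s) / s) y :=
    ((hd (y / s)).hasDerivAt.comp y ((hasDerivAt_id y).div_const s)).div_const s
  rw [h.deriv]
  ring

lemma fisherIntegrand_dilate (hd : Differentiable ℝ p) (hs : s ≠ 0) (y : ℝ) :
    (deriv (dilate s p) y / dilate s p y) ^ 2 * dilate s p y =
      (deriv p (y / s) / p (y / s)) ^ 2 * p (y / s) / s ^ 3 := by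
  rw [deriv_dilate hd, dilate]
  rcases eq_or_ne (p (y / s)) 0 with h | h
  · simp [h]
  · field_simp

lemma integral_comp_div_of_pos (g : ℝ → ℝ) (hs : 0 < s) :
    ∫ y, g (y / s) = s * ∫ y, g y := by
  rw [Measure.integral_comp_div, abs_of_pos hs, smul_eq_mul]

lemma niceDensity_dilate (hp : NiceDensity p) (hs : 0 < s) : NiceDensity (dilate s p) := by
  have hi := hp.integrable
  have h1 := hp.integral_eq_one
  obtain ⟨hd, h0, -, hF, hm⟩ := hp
  refine ⟨(hd.comp (differentiable_id.div_const s)).div_const s,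
    fun y => div_nonneg (h0 _) hs.le, isProbabilityMeasure_densMeasure
      (fun y => div_nonneg (h0 _) hs.le) ((hi.comp_div hs.ne').div_const s) ?_, ?_, ?_⟩
  · unfold dilate
    rw [integral_div, integral_comp_div_of_pos p hs, h1]
    field_simp
  · exact ((hF.comp_div hs.ne').div_const (s ^ 3)).congr
      (ae_of_all _ fun y => (fisherIntegrand_dilate hd hs.ne' y).symm)
  · refine ((hm.comp_div hs.ne').const_mul s).congr (ae_of_all _ fun y => ?_)
    unfold dilate
    field_simp

lemma fisherInfoFn_dilate (hd : Differentiable ℝ p) (hs : 0 < s) :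
    fisherInfoFn (dilate s p) = fisherInfoFn p / s ^ 2 := by
  rw [fisherInfoFn, integral_congr_ae (ae_of_all _ (fisherIntegrand_dilate hd hs.ne')),
    integral_div, integral_comp_div_of_pos (fun u => (deriv p u / p u) ^ 2 * p u) hs,
    fisherInfoFn]
  field_simp

lemma diffEntropy_dilate (hp : NiceDensity p) (hs : 0 < s) :
    diffEntropy (dilate s p) = diffEntropy p + log s := by
  have hpoint (y : ℝ) : dilate s p y * log (dilate s p y) =
      (p (y / s) * log (p (y / s)) - log s * p (y / s)) / s := by
    rw [dilate]
    rcases eq_or_ne (p (y / s)) 0 with h | h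
    · simp [h]
    · rw [log_div h hs.ne']
      ring
  rw [diffEntropy, integral_congr_ae (ae_of_all _ hpoint), integral_div,
    integral_comp_div_of_pos (fun u => p u * log (p u) - log s * p u) hs,
    integral_sub hp.integrable_mul_log (hp.integrable.const_mul _), integral_const_mul,
    hp.integral_eq_one, diffEntropy]
  field_simp
  ring

/-- **Carlen's equivalence.** The one-dimensional Gaussian logarithmic Sobolev inequality
`D(P_Y‖G) ≤ ½ I(P_Y‖G)` holds for every random variable `Y` in the class (of differentiable,
absolutely continuous densities with finite Fisher information and finite second moment)
if and only if Stam's inequality `N(Y)·J(Y) ≥ 1` holds for every `Y` in this class. -/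
theorem gaussian_LSI_iff_stam :
    (∀ p : ℝ → ℝ, NiceDensity p →
        relEnt (densMeasure p) (gaussianReal 0 1) ≤ ENNReal.ofReal ((1/2) * relFisherGauss p)) ↔
    (∀ p : ℝ → ℝ, NiceDensity p → 1 ≤ entropyPower p * fisherInfoFn p) := by
  constructor
  · intro hLSI p hp
    rw [one_le_entropyPower_mul_iff, exp_le_exp_mul_iff_forall_pos]
    intro s hs
    have hps := niceDensity_dilate hp hs
    have h := hps.relEnt_le_half_relFisherGauss_iff.1 (hLSI _ hps)
    rw [diffEntropy_dilate hp hs, fisherInfoFn_dilate hp.differentiable hs] at h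
    linarith
  · intro hStam p hp
    have h := (one_le_entropyPower_mul_iff p _).1 (hStam p hp)
    rw [hp.relEnt_le_half_relFisherGauss_iff]
    have h1 := exp_le_exp_mul_iff_forall_pos.1 h 1 one_pos
    rw [log_one, one_pow, div_one] at h1
    linarith
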